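/- arXiv:1901.09341 — 2 statements merged into one kernel-verified Lean document; each statement's English description precedes it below -/
import Mathlib

section
/- The constant 3/2 in the two-dimensional transference theorem is attained: for the 0-symmetric parallelogram □ = Conv(±(1, 3/2), ±(1, -1/2)) ⊂ ℝ^2, whose polar body is □^* = Conv(±(1, 0), ±(-1/2, 1)), one has λ_1(ℤ^2, □) = 1 and λ_2(ℤ^2, □^*) = 3/2, so that λ_1(ℤ^2, □) · λ_2(ℤ^2, □^*) = 3/2. -/
open Pointwise

/-- The dimension of a subset `A ⊆ ℝ^d`: the dimension of the real vector space spanned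
by the difference set `A - A`. -/
noncomputable def setDim {d : ℕ} (A : Set (Fin d → ℝ)) : ℕ :=
  Module.finrank ℝ (Submodule.span ℝ {x : Fin d → ℝ | ∃ a ∈ A, ∃ b ∈ A, x = a - b})

/-- The `i`-th successive minimum of a convex set `K ⊆ ℝ^d` with respect to the lattice
`ℤ^d`: `λ_i(ℤ^d, K) = sup { t ≥ 0 | dim (ℤ^d ∩ tK) < i }`. -/
noncomputable def succMinimum {d : ℕ} (i : ℕ) (K : Set (Fin d → ℝ)) : ℝ :=
  sSup {t : ℝ | 0 ≤ t ∧
    setDim {x : Fin d → ℝ | (∀ j, ∃ z : ℤ, x j = (z : ℝ)) ∧ x ∈ t • K} < i}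

/-- The polar of a `0`-symmetric convex set `K ⊆ ℝ^d`:
`K^* = { y | |⟨y, x⟩| ≤ 1 for all x ∈ K }`. -/
def polarBody {d : ℕ} (K : Set (Fin d → ℝ)) : Set (Fin d → ℝ) :=
  {y | ∀ x ∈ K, |∑ i, y i * x i| ≤ 1}

/-!
Both bodies are parallelograms `Conv(±v, ±w)`, and the polar of such a parallelogram is the
parallelogram `Conv(±a, ±b)` of a dual pair: `a ⬝ v = a ⬝ w = b ⬝ v = 1 = -(b ⬝ w)`.
Testing a lattice point `(m, n) ∈ t • □` against the vertices `(1, 0)`, `(-1/2, 1)` of `□^*`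
gives `|m| ≤ t` and `|2n - m| ≤ 2t`, so `(m, n) = 0` for `t < 1`, while `(1, 0) ∈ □`.
Testing `(m, n) ∈ t • □^*` against the vertices of `□` gives `|2m + 3n| ≤ 2t` and
`|2m - n| ≤ 2t`, so `n = 0` for `t < 3/2`, while the independent lattice points `(1, 0)` and
`(-1, 1)` lie in `(3/2) • □^*`.
-/
section Parallelogram

variable {E : Type*} [AddCommGroup E] [Module ℝ E]

def parallelogram (v w : E) : Set E :=
  convexHull ℝ {v, -v, w, -w}

theorem smul_add_smul_mem_parallelogram (v w : E) {s t : ℝ} (h : |s| + |t| ≤ 1) :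
    s • v + t • w ∈ parallelogram v w := by
  have := neg_abs_le s; have := le_abs_self s; have := neg_abs_le t; have := le_abs_self t
  have key := (convex_convexHull ℝ ({v, -v, w, -w} : Set E)).sum_mem (t := Finset.univ)
    (w := ![(1 + s - |t|) / 2, (1 - s - |t|) / 2, (|t| + t) / 2, (|t| - t) / 2])
    (z := ![v, -v, w, -w])
    (by intro i _; fin_cases i <;> simp <;> linarith)
    (by simp [Fin.sum_univ_four]; ring)
    (by intro i _; fin_cases i <;> exact subset_convexHull ℝ _ (by simp))
  rw [parallelogram]
  convert key using 1
  simp only [Fin.sum_univ_four, Matrix.cons_val]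
  module

theorem zero_mem_smul_parallelogram (v w : E) (c : ℝ) : (0 : E) ∈ c • parallelogram v w := by
  simpa using Set.smul_mem_smul_set (a := c)
    (smul_add_smul_mem_parallelogram v w (s := 0) (t := 0) (by simp))

theorem smul_add_smul_mem_smul_parallelogram (v w : E) {s t c : ℝ} (hc : 0 < c)
    (h : |s| + |t| ≤ c) : s • v + t • w ∈ c • parallelogram v w := by
  rw [Set.mem_smul_set_iff_inv_smul_mem₀ hc.ne', smul_add, smul_smul, smul_smul]
  apply smul_add_smul_mem_parallelogram
  rw [abs_mul, abs_mul, abs_inv, abs_of_pos hc, ← mul_add, inv_mul_le_one₀ hc]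
  exact h

end Parallelogram

section Polar

variable {d : ℕ}

theorem mem_polarBody {K : Set (Fin d → ℝ)} {y : Fin d → ℝ} :
    y ∈ polarBody K ↔ ∀ x ∈ K, |y ⬝ᵥ x| ≤ 1 :=
  Iff.rfl

theorem convex_setOf_abs_dotProduct_le (y : Fin d → ℝ) (c : ℝ) :
    Convex ℝ {x : Fin d → ℝ | |y ⬝ᵥ x| ≤ c} := by
  have h := (convex_Icc (-c) c).linear_preimage (dotProductEquiv ℝ (Fin d) y)
  have hset : dotProductEquiv ℝ (Fin d) y ⁻¹' Set.Icc (-c) c = {x | |y ⬝ᵥ x| ≤ c} := by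
    ext x
    simp [abs_le]
  rwa [hset] at h

theorem convex_polarBody (K : Set (Fin d → ℝ)) : Convex ℝ (polarBody K) := by
  have : polarBody K = ⋂ x ∈ K, {y | |x ⬝ᵥ y| ≤ 1} := by
    ext y
    simp [mem_polarBody, dotProduct_comm]
  rw [this]
  exact convex_iInter₂ fun x _ => convex_setOf_abs_dotProduct_le x 1

theorem polarBody_convexHull (s : Set (Fin d → ℝ)) :
    polarBody (convexHull ℝ s) = polarBody s :=
  subset_antisymm (fun _ hy x hx => hy x (subset_convexHull ℝ s hx))
    fun y hy => convexHull_min hy (convex_setOf_abs_dotProduct_le y 1)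

theorem mem_polarBody_parallelogram {v w y : Fin d → ℝ} :
    y ∈ polarBody (parallelogram v w) ↔ |y ⬝ᵥ v| ≤ 1 ∧ |y ⬝ᵥ w| ≤ 1 := by
  simp [parallelogram, polarBody_convexHull, mem_polarBody]

/-- For `y = s • a + t • b` one has `y ⬝ v = s + t` and `y ⬝ w = s - t`, and
`max |s + t| |s - t| = |s| + |t|`. -/
theorem polarBody_parallelogram {v w a b : Fin d → ℝ}
    (hav : a ⬝ᵥ v = 1) (haw : a ⬝ᵥ w = 1) (hbv : b ⬝ᵥ v = 1) (hbw : b ⬝ᵥ w = -1)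
    (hspan : ∀ y, ∃ s t : ℝ, y = s • a + t • b) :
    polarBody (parallelogram v w) = parallelogram a b := by
  apply subset_antisymm
  · intro y hy
    obtain ⟨s, t, rfl⟩ := hspan y
    simp only [mem_polarBody_parallelogram, add_dotProduct, smul_dotProduct, hav, haw, hbv, hbw,
      smul_eq_mul, abs_le] at hy
    apply smul_add_smul_mem_parallelogram
    cases abs_cases s <;> cases abs_cases t <;> linarith
  · refine convexHull_min ?_ (convex_polarBody _)
    rintro y (rfl | rfl | rfl | rfl) <;>
      simp [mem_polarBody_parallelogram, hav, haw, hbv, hbw]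

theorem abs_dotProduct_le_of_mem_smul {K : Set (Fin d → ℝ)} {t : ℝ} (ht : 0 ≤ t)
    {x y : Fin d → ℝ} (hx : x ∈ t • K) (hy : y ∈ polarBody K) : |y ⬝ᵥ x| ≤ t := by
  obtain ⟨k, hk, rfl⟩ := hx
  rw [dotProduct_smul, smul_eq_mul, abs_mul, abs_of_nonneg ht]
  exact mul_le_of_le_one_right ht (hy k hk)

end Polar

section SuccessiveMinima

variable {d : ℕ}

/-- `ℤ^d ∩ S`, in the form in which it appears in `succMinimum`. -/
def latticePoints (S : Set (Fin d → ℝ)) : Set (Fin d → ℝ) :=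
  {x | (∀ j, ∃ z : ℤ, x j = z) ∧ x ∈ S}

theorem zero_mem_latticePoints {S : Set (Fin d → ℝ)} (h : 0 ∈ S) : 0 ∈ latticePoints S :=
  ⟨fun _ => ⟨0, by simp⟩, h⟩

theorem setDim_le_finrank {A : Set (Fin d → ℝ)} (p : Submodule ℝ (Fin d → ℝ)) (hA : A ⊆ p) :
    setDim A ≤ Module.finrank ℝ p := by
  refine Submodule.finrank_mono (Submodule.span_le.mpr ?_)
  rintro x ⟨a, ha, b, hb, rfl⟩
  exact p.sub_mem (hA ha) (hA hb)

theorem card_le_setDim {A : Set (Fin d → ℝ)} (h0 : 0 ∈ A) {ι : Type*} [Fintype ι]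
    {f : ι → Fin d → ℝ} (hf : LinearIndependent ℝ f) (hfA : ∀ i, f i ∈ A) :
    Fintype.card ι ≤ setDim A := by
  rw [← finrank_span_eq_card hf]
  refine Submodule.finrank_mono (Submodule.span_mono ?_)
  rintro _ ⟨i, rfl⟩
  exact ⟨f i, hfA i, 0, h0, (sub_zero _).symm⟩

theorem succMinimum_eq {i : ℕ} {K : Set (Fin d → ℝ)} {μ : ℝ} (hμ : 0 < μ)
    (hbelow : ∀ t, 0 ≤ t → t < μ → setDim (latticePoints (t • K)) < i)
    (habove : ∀ t, μ < t → i ≤ setDim (latticePoints (t • K))) :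
    succMinimum i K = μ := by
  refine csSup_eq_of_forall_le_of_forall_lt_exists_gt ⟨0, le_rfl, hbelow 0 le_rfl hμ⟩ ?_ ?_
  · rintro t ⟨-, ht⟩
    by_contra! h
    exact (habove t h).not_gt ht
  · intro w hw
    obtain ⟨t, hwt, htμ⟩ := exists_between (max_lt hw hμ)
    have ht0 : 0 ≤ t := (le_max_right w 0).trans hwt.le
    exact ⟨t, ⟨ht0, hbelow t ht0 htμ⟩, (le_max_left w 0).trans_lt hwt⟩

end SuccessiveMinima

theorem exists_int_eq_of_mem_latticePoints {S : Set (Fin 2 → ℝ)} {x : Fin 2 → ℝ}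
    (hx : x ∈ latticePoints S) : ∃ m n : ℤ, x = ![(m : ℝ), n] := by
  obtain ⟨⟨m, hm⟩, ⟨n, hn⟩⟩ := And.intro (hx.1 0) (hx.1 1)
  exact ⟨m, n, by ext j; fin_cases j <;> simp [hm, hn]⟩

theorem vec_mem_latticePoints {S : Set (Fin 2 → ℝ)} {m n : ℤ} (h : ![(m : ℝ), n] ∈ S) :
    ![(m : ℝ), n] ∈ latticePoints S :=
  ⟨fun j => by fin_cases j; exacts [⟨m, rfl⟩, ⟨n, rfl⟩], h⟩

local notation "□" => parallelogram ![(1 : ℝ), 3 / 2] ![(1 : ℝ), -(1 / 2)]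

local notation "□*" => parallelogram ![(1 : ℝ), 0] ![-(1 / 2 : ℝ), 1]

theorem convexHull_eq_box :
    convexHull ℝ {![(1 : ℝ), 3 / 2], ![(-1 : ℝ), -(3 / 2)], ![(1 : ℝ), -(1 / 2)],
      ![(-1 : ℝ), 1 / 2]} = □ := by
  simp [parallelogram, Matrix.neg_cons]

theorem convexHull_eq_box_polar :
    convexHull ℝ {![(1 : ℝ), 0], ![(-1 : ℝ), 0], ![(-(1 / 2) : ℝ), 1], ![(1 / 2 : ℝ), -1]} =
      □* := by
  simp [parallelogram, Matrix.neg_cons]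

theorem polarBody_box : polarBody □ = □* :=
  polarBody_parallelogram (by norm_num) (by norm_num) (by norm_num) (by norm_num)
    fun y => ⟨y 0 + y 1 / 2, y 1, by ext j; fin_cases j <;> simp; ring⟩

theorem latticePoints_smul_box_subset {t : ℝ} (ht0 : 0 ≤ t) (ht : t < 1) :
    latticePoints (t • □) ⊆ {0} := by
  intro x hx
  obtain ⟨m, n, rfl⟩ := exists_int_eq_of_mem_latticePoints hx
  have h₁ := abs_dotProduct_le_of_mem_smul ht0 hx.2 (y := ![1, 0])
    (mem_polarBody_parallelogram.mpr (by norm_num))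
  have h₂ := abs_dotProduct_le_of_mem_smul ht0 hx.2 (y := ![-(1 / 2), 1])
    (mem_polarBody_parallelogram.mpr (by norm_num))
  simp only [dotProduct, Fin.sum_univ_two, abs_le] at h₁ h₂
  norm_num at h₁ h₂
  have hm : -1 < m ∧ m < 1 := by constructor <;> rify <;> linarith
  have hn : -2 < 2 * n - m ∧ 2 * n - m < 2 := by constructor <;> rify <;> linarith
  obtain ⟨rfl, rfl⟩ : m = 0 ∧ n = 0 := by omega
  simp

theorem latticePoints_smul_box_polar_subset {t : ℝ} (ht0 : 0 ≤ t) (ht : t < 3 / 2) :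
    latticePoints (t • □*) ⊆ (ℝ ∙ ![(1 : ℝ), 0] : Set (Fin 2 → ℝ)) := by
  intro x hx
  obtain ⟨m, n, rfl⟩ := exists_int_eq_of_mem_latticePoints hx
  have h₁ := abs_dotProduct_le_of_mem_smul ht0 hx.2 (y := ![1, 3 / 2])
    (mem_polarBody_parallelogram.mpr (by norm_num))
  have h₂ := abs_dotProduct_le_of_mem_smul ht0 hx.2 (y := ![1, -(1 / 2)])
    (mem_polarBody_parallelogram.mpr (by norm_num))
  simp only [dotProduct, Fin.sum_univ_two, abs_le] at h₁ h₂
  norm_num at h₁ h₂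
  have h₁' : -3 < 2 * m + 3 * n ∧ 2 * m + 3 * n < 3 := by constructor <;> rify <;> linarith
  have h₂' : -3 < 2 * m - n ∧ 2 * m - n < 3 := by constructor <;> rify <;> linarith
  obtain ⟨hn₁, hn₂⟩ : -1 ≤ n ∧ n ≤ 1 := by omega
  obtain rfl : n = 0 := by interval_cases n <;> omega
  exact Submodule.mem_span_singleton.mpr ⟨m, by ext j; fin_cases j <;> simp⟩

theorem succMinimum_one_box : succMinimum 1 □ = 1 := by
  refine succMinimum_eq one_pos (fun t ht0 ht => ?_) fun t ht => ?_
  · have h := setDim_le_finrank (A := latticePoints (t • □)) ⊥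
      (by simpa using latticePoints_smul_box_subset ht0 ht)
    rw [finrank_bot] at h
    omega
  · have he : ![(1 : ℝ), 0] ∈ t • □ := by
      convert smul_add_smul_mem_smul_parallelogram _ _ (s := 1 / 4) (t := 3 / 4)
        (by linarith) (by norm_num; linarith) using 1
      ext j; fin_cases j <;> norm_num
    have hli : LinearIndependent ℝ ![![(1 : ℝ), 0]] := linearIndependent_unique_iff.mpr (by simp)
    simpa using card_le_setDim (zero_mem_latticePoints (zero_mem_smul_parallelogram _ _ t)) hli
      fun i => by
        fin_cases i
        simpa using vec_mem_latticePoints (m := 1) (n := 0) (by simpa using he)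

theorem succMinimum_two_box_polar : succMinimum 2 □* = 3 / 2 := by
  refine succMinimum_eq (by norm_num) (fun t ht0 ht => ?_) fun t ht => ?_
  · have h := setDim_le_finrank _ (latticePoints_smul_box_polar_subset ht0 ht)
    rw [finrank_span_singleton (by simp)] at h
    omega
  · have ht0 : 0 < t := by linarith
    have he₁ : ![(1 : ℝ), 0] ∈ t • □* := by
      simpa using smul_add_smul_mem_smul_parallelogram ![(1 : ℝ), 0] ![-(1 / 2 : ℝ), 1]
        (s := 1) (t := 0) ht0 (by norm_num; linarith)
    have he₂ : ![(-1 : ℝ), 1] ∈ t • □* := by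
      convert smul_add_smul_mem_smul_parallelogram _ _ (s := -(1 / 2)) (t := 1) ht0
        (by norm_num; linarith) using 1
      ext j; fin_cases j <;> norm_num
    have hli : LinearIndependent ℝ ![![(1 : ℝ), 0], ![-1, 1]] := by
      refine LinearIndependent.pair_iff.mpr fun a b hab => ?_
      have h₀ := congrFun hab 0
      have h₁ := congrFun hab 1
      simp at h₀ h₁
      constructor <;> linarith
    simpa using card_le_setDim (zero_mem_latticePoints (zero_mem_smul_parallelogram _ _ t)) hli
      fun i => by
        fin_cases i
        · simpa using vec_mem_latticePoints (m := 1) (n := 0) (by simpa using he₁)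
        · simpa using vec_mem_latticePoints (m := -1) (n := 1) (by simpa using he₂)

/-- The bound `3/2` in the two-dimensional transference theorem is attained: for the
`0`-symmetric parallelogram `K = Conv(±(1, 3/2), ±(1, -1/2))`, the polar body is
`K^* = Conv(±(1, 0), ±(-1/2, 1))`, `λ₁(ℤ², K) = 1`, `λ₂(ℤ², K^*) = 3/2`, and hence
`λ₁(ℤ², K) · λ₂(ℤ², K^*) = 3/2`. -/
theorem transference_dim_two_sharp :
    polarBody (convexHull ℝ
        {![(1 : ℝ), 3 / 2], ![(-1 : ℝ), -(3 / 2)], ![(1 : ℝ), -(1 / 2)], ![(-1 : ℝ), 1 / 2]}) =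
      convexHull ℝ
        {![(1 : ℝ), 0], ![(-1 : ℝ), 0], ![(-(1 / 2) : ℝ), 1], ![(1 / 2 : ℝ), -1]} ∧
    succMinimum 1 (convexHull ℝ
        {![(1 : ℝ), 3 / 2], ![(-1 : ℝ), -(3 / 2)], ![(1 : ℝ), -(1 / 2)], ![(-1 : ℝ), 1 / 2]})
      = 1 ∧
    succMinimum 2 (polarBody (convexHull ℝ
        {![(1 : ℝ), 3 / 2], ![(-1 : ℝ), -(3 / 2)], ![(1 : ℝ), -(1 / 2)], ![(-1 : ℝ), 1 / 2]}))
      = 3 / 2 ∧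
    succMinimum 1 (convexHull ℝ
        {![(1 : ℝ), 3 / 2], ![(-1 : ℝ), -(3 / 2)], ![(1 : ℝ), -(1 / 2)], ![(-1 : ℝ), 1 / 2]})
      * succMinimum 2 (polarBody (convexHull ℝ
        {![(1 : ℝ), 3 / 2], ![(-1 : ℝ), -(3 / 2)], ![(1 : ℝ), -(1 / 2)], ![(-1 : ℝ), 1 / 2]}))
      = 3 / 2 := by
  rw [convexHull_eq_box, convexHull_eq_box_polar, polarBody_box, succMinimum_one_box,
    succMinimum_two_box_polar]
  norm_num
end

section
/- Let □ ⊂ ℝ^2 be a 0-symmetric convex polygon of dimension 2 with ℤ^2 ∩ int(□) = {0} and with at least one lattice point on its boundary (i.e. λ_1(ℤ^2, □) = 1), which is maximal in the sense that every edge of □ contains a lattice point in its relative interior. Choose on each edge F exactly one lattice point u_F in its relative interior, in such a way that -u_F is the point chosen on the opposite edge -F, and let Q be the convex hull of the chosen points. Then there is a change of basis of the lattice ℤ^2 (an element of GL_2(ℤ)) taking Q to either (1) the square with vertices (1,0), (0,1), (-1,0), (0,-1), or (2) the hexagon with vertices (1,0), (0,1), (-1,1), (-1,0), (0,-1), (1,-1).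 -/
open Pointwise

/-- The dimension of a subset `A ⊆ ℝ²`: the dimension of the real vector space spanned
by the difference set `A - A`. -/
noncomputable def setDim2 (A : Set (Fin 2 → ℝ)) : ℕ :=
  Module.finrank ℝ (Submodule.span ℝ {x : Fin 2 → ℝ | ∃ a ∈ A, ∃ b ∈ A, x = a - b})

/-- `F` is an edge (one-dimensional exposed face) of the convex polygon `K ⊆ ℝ²`. -/
def IsEdge (K F : Set (Fin 2 → ℝ)) : Prop :=
  ∃ φ : (Fin 2 → ℝ) →ₗ[ℝ] ℝ, φ ≠ 0 ∧
    F = {x ∈ K | ∀ y ∈ K, φ y ≤ φ x} ∧ setDim2 F = 1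

/-- A point of `ℝ²` is a lattice point if all its coordinates are integers. -/
def IsLatticePoint (x : Fin 2 → ℝ) : Prop := ∀ i, ∃ z : ℤ, x i = (z : ℝ)

/-!
Lattice points `pa`, `pb` in the relative interiors of two non-parallel edges form a basis of
`ℤ²`. Reduce a lattice point
`α • pa + β • pb` modulo `ℤ pa + ℤ pb` to `|α|, |β| ≤ 1/2`. By the triangle inequality for the
gauge of `S` it lies in the interior of `S` when `|α| + |β| < 1`, and also when
`|α| = |β| = 1/2`: otherwise a supporting line at that point would support `S` along both edges,
making them equal or opposite. So the reduced point is an interior lattice point, hence `0`.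

Hence the set `U` of chosen points is symmetric and any two non-opposite points of `U` form a
lattice basis. Fix such a basis `p, q ∈ U` and write `r ∈ U` as `a • p + b • q`; since `(p, r)`
and `(q, r)` are bases too, `a, b = ±1`. Moreover `p + q` and `p - q` are not both in `U`, as they
span a sublattice of index `2`. So `U` is `{±p, ±q}` or, after replacing `q` by `-q`,
`{±p, ±q, ±(p + q)}`, and the unimodular matrix sending `(p, q)`, respectively `(p, p + q)`, to
the standard basis maps `conv U` onto the square, respectively the hexagon.
-/

open Set Filter Topology

local notation "ℝ²" => Fin 2 → ℝ

section ExposedFaces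

variable {E : Type*} [NormedAddCommGroup E] [NormedSpace ℝ E] {S F : Set E}

def exposedFace (S : Set E) (φ : E →ₗ[ℝ] ℝ) : Set E :=
  {x ∈ S | ∀ y ∈ S, φ y ≤ φ x}

theorem exposedFace_subset (φ : E →ₗ[ℝ] ℝ) : exposedFace S φ ⊆ S := fun _ hx => hx.1

theorem exposedFace_neg (hsymm : S = -S) (φ : E →ₗ[ℝ] ℝ) :
    exposedFace S (-φ) = -exposedFace S φ := by
  have hneg : ∀ {x}, -x ∈ S ↔ x ∈ S := fun {x} => by
    conv_rhs => rw [hsymm]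
    rfl
  ext x
  simp only [exposedFace, Set.mem_neg, mem_ofPred_eq, LinearMap.neg_apply, map_neg,
    neg_le_neg_iff, hneg]
  refine and_congr_right fun _ => ⟨fun h y hy => ?_, fun h y hy => ?_⟩ <;>
  · have := h (-y) (hneg.2 hy)
    rw [map_neg] at this
    linarith

theorem exposedFace_smul_of_pos {c : ℝ} (hc : 0 < c) (φ : E →ₗ[ℝ] ℝ) :
    exposedFace S (c • φ) = exposedFace S φ := by
  simp [exposedFace, mul_le_mul_iff_right₀ hc]

theorem exposedFace_smul_eq_or_eq_neg (hsymm : S = -S) {c : ℝ} (hc : c ≠ 0)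
    (φ : E →ₗ[ℝ] ℝ) :
    exposedFace S (c • φ) = exposedFace S φ ∨ exposedFace S (c • φ) = -exposedFace S φ := by
  rcases hc.lt_or_gt with hc | hc
  · right
    rw [← exposedFace_neg hsymm, ← exposedFace_smul_of_pos (neg_pos.2 hc) (-φ), smul_neg,
      neg_smul, neg_neg]
  · exact Or.inl (exposedFace_smul_of_pos hc φ)

theorem isExtreme_exposedFace [FiniteDimensional ℝ E] (φ : E →ₗ[ℝ] ℝ) :
    IsExtreme ℝ S (exposedFace S φ) :=
  IsExposed.isExtreme fun _ => ⟨LinearMap.toContinuousLinearMap φ, rfl⟩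

theorem notMem_interior_of_mem_exposedFace {φ : E →ₗ[ℝ] ℝ} (hφ : φ ≠ 0) {x : E}
    (hx : x ∈ exposedFace S φ) : x ∉ interior S := by
  intro hxS
  obtain ⟨d, hd⟩ : ∃ d, 0 < φ d := by
    obtain ⟨d, hd⟩ := DFunLike.ne_iff.1 hφ
    rcases (show φ d ≠ 0 from hd).lt_or_gt with h | h
    exacts [⟨-d, by simpa using h⟩, ⟨d, h⟩]
  have hline : ∀ᶠ t : ℝ in 𝓝 0, x + t • d ∈ S :=
    ((by fun_prop : Continuous fun t : ℝ => x + t • d).tendsto' 0 x (by simp)).eventually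
      (mem_interior_iff_mem_nhds.1 hxS)
  obtain ⟨t, ht, htpos⟩ :=
    ((hline.filter_mono nhdsWithin_le_nhds).and (self_mem_nhdsWithin (s := Ioi 0))).exists
  have := hx.2 _ ht
  simp only [map_add, map_smul, smul_eq_mul] at this
  nlinarith [show (0 : ℝ) < t from htpos]

theorem vectorSpan_exposedFace_le_ker (S : Set E) (φ : E →ₗ[ℝ] ℝ) :
    vectorSpan ℝ (exposedFace S φ) ≤ LinearMap.ker φ := by
  rw [vectorSpan_def, Submodule.span_le]
  rintro _ ⟨a, ha, b, hb, rfl⟩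
  simp [le_antisymm (hb.2 a ha.1) (ha.2 b hb.1)]

theorem mem_exposedFace_convexHull {V : Set E} {ψ : E →ₗ[ℝ] ℝ} {p : E} (hp : p ∈ V)
    (hmax : ∀ x ∈ V, ψ x ≤ ψ p) : p ∈ exposedFace (convexHull ℝ V) ψ :=
  ⟨subset_convexHull ℝ V hp, fun _ hy =>
    convexHull_min (t := {x | ψ x ≤ ψ p}) hmax (convex_halfSpace_le ψ.isLinear _) hy⟩

theorem vectorSpan_neg (A : Set E) : vectorSpan ℝ (-A) = vectorSpan ℝ A := by
  rw [vectorSpan_def, vectorSpan_def]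
  congr 1
  ext x
  simp only [Set.mem_vsub, Set.mem_neg, vsub_eq_sub]
  constructor <;> rintro ⟨a, ha, b, hb, rfl⟩ <;> exact ⟨-b, by simpa, -a, by simpa, by abel⟩

theorem exists_mem_openSegment_of_mem_intrinsicInterior {v y : E}
    (hv : v ∈ intrinsicInterior ℝ F) (hy : y ∈ F) : ∃ y' ∈ F, v ∈ openSegment ℝ y y' := by
  obtain ⟨w, hw, rfl⟩ := hv
  let g : ℝ → affineSpan ℝ F := fun t =>
    ⟨t • ((w : E) - y) + w,
      AffineSubspace.smul_vsub_vadd_mem _ t w.2 (subset_affineSpan ℝ F hy) w.2⟩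
  have hg : Continuous g := by fun_prop
  have hF : ∀ᶠ t in 𝓝[>] (0 : ℝ), (g t : E) ∈ F :=
    nhdsWithin_le_nhds <| (hg.tendsto' 0 w (by ext; simp [g])).eventually
      (mem_interior_iff_mem_nhds.1 hw)
  obtain ⟨t, ht, htpos⟩ := (hF.and self_mem_nhdsWithin).exists
  have htpos : (0 : ℝ) < t := htpos
  refine ⟨g t, ht, t / (1 + t), 1 / (1 + t), by positivity, by positivity, by field_simp; ring, ?_⟩
  simp only [g]
  match_scalars <;> field_simp <;> ring

theorem exists_le_of_notMem_interior (hconv : Convex ℝ S) (hS : (interior S).Nonempty)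
    {z : E} (hz : z ∉ interior S) : ∃ f : E →ₗ[ℝ] ℝ, f ≠ 0 ∧ ∀ y ∈ S, f y ≤ f z := by
  obtain ⟨f, hf⟩ := geometric_hahn_banach_open_point hconv.interior isOpen_interior hz
  refine ⟨f, fun h => ?_, fun y hy => ?_⟩
  · obtain ⟨a, ha⟩ := hS
    have hfa := LinearMap.congr_fun h a
    have hfz := LinearMap.congr_fun h z
    simp only [ContinuousLinearMap.coe_coe, LinearMap.zero_apply] at hfa hfz
    linarith [hf a ha]
  · have : closure (interior S) ⊆ {y | f y ≤ f z} :=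
      closure_minimal (fun a ha => (hf a ha).le) (isClosed_le f.continuous continuous_const)
    rw [hconv.closure_interior_eq_closure_of_nonempty_interior hS] at this
    exact this (subset_closure hy)

theorem balanced_of_eq_neg (hconv : Convex ℝ S) (hsymm : S = -S) : Balanced ℝ S :=
  (balanced_iff_neg_mem hconv).2 fun x hx => by rw [hsymm]; simpa using hx

theorem gauge_smul_of_eq_neg (hconv : Convex ℝ S) (hsymm : S = -S) (r : ℝ) (x : E) :
    gauge S (r • x) = |r| * gauge S x := by
  rw [gauge_smul (balanced_of_eq_neg hconv hsymm), Real.norm_eq_abs]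

theorem smul_add_smul_mem_interior_of_abs_add_lt_one (hconv : Convex ℝ S) (hsymm : S = -S)
    (h0 : (0 : E) ∈ interior S) {a b : E} (ha : a ∈ S) (hb : b ∈ S) {α β : ℝ}
    (hαβ : |α| + |β| < 1) : α • a + β • b ∈ interior S := by
  have hS : S ∈ 𝓝 0 := mem_interior_iff_mem_nhds.1 h0
  rw [← gauge_lt_one_iff_mem_interior hconv hS]
  calc gauge S (α • a + β • b) ≤ gauge S (α • a) + gauge S (β • b) :=
        gauge_add_le hconv (absorbent_nhds_zero hS) _ _
    _ = |α| * gauge S a + |β| * gauge S b := by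
        rw [gauge_smul_of_eq_neg hconv hsymm, gauge_smul_of_eq_neg hconv hsymm]
    _ ≤ |α| * 1 + |β| * 1 := by gcongr <;> exact gauge_le_one_of_mem ‹_›
    _ < 1 := by linarith

theorem gauge_eq_one_of_notMem_interior (hconv : Convex ℝ S) (h0 : (0 : E) ∈ interior S)
    {x : E} (hx : x ∈ S) (hx' : x ∉ interior S) : gauge S x = 1 :=
  (gauge_eq_one_iff_mem_frontier hconv (mem_interior_iff_mem_nhds.1 h0)).2
    ⟨subset_closure hx, hx'⟩

end ExposedFaces

/-- Gift wrapping: tilt `c` towards `d` until a second point of `V` becomes a maximizer. -/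
theorem Finset.exists_tilt_two_maximizers {α : Type*} (V : Finset α) (c d : α → ℝ) {b p₀ : α}
    (hbmax : ∀ x ∈ V, c x ≤ c b) (hp₀ : p₀ ∈ V) (hd : d b < d p₀) :
    ∃ θ : ℝ, ∃ p ∈ V, p ≠ b ∧ c p + θ * d p = c b + θ * d b ∧
      ∀ x ∈ V, c x + θ * d x ≤ c b + θ * d b := by
  classical
  set W := V.filter fun x => d b < d x
  obtain ⟨p, hpW, hpmin⟩ := W.exists_min_image (fun x => (c b - c x) / (d x - d b))
    ⟨p₀, Finset.mem_filter.2 ⟨hp₀, hd⟩⟩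
  obtain ⟨hp, hpd⟩ := Finset.mem_filter.1 hpW
  set θ := (c b - c p) / (d p - d b)
  have hθ : 0 ≤ θ := div_nonneg (by linarith [hbmax p hp]) (by linarith)
  refine ⟨θ, p, hp, fun h => (h ▸ hpd).false, ?_, fun x hx => ?_⟩
  · have : θ * (d p - d b) = c b - c p := div_mul_cancel₀ _ (by linarith)
    linarith
  · by_cases hxd : d b < d x
    · have := hpmin x (Finset.mem_filter.2 ⟨hx, hxd⟩)
      rw [le_div_iff₀ (by linarith)] at this
      linarith
    · nlinarith [hbmax x hx]

section Edges

variable {S F : Set ℝ²}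

theorem setDim2_eq_finrank_vectorSpan (A : Set ℝ²) :
    setDim2 A = Module.finrank ℝ (vectorSpan ℝ A) := by
  have : {x : ℝ² | ∃ a ∈ A, ∃ b ∈ A, x = a - b} = A -ᵥ A := by
    ext
    simp [Set.mem_vsub, eq_comm]
  rw [setDim2, this, vectorSpan_def]

theorem finrank_ker_le_one {φ : ℝ² →ₗ[ℝ] ℝ} (hφ : φ ≠ 0) :
    Module.finrank ℝ (LinearMap.ker φ) ≤ 1 := by
  have := Submodule.finrank_lt (mt LinearMap.ker_eq_top.1 hφ)
  rw [Module.finrank_fin_fun] at this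
  omega

theorem IsEdge.subset (hF : IsEdge S F) : F ⊆ S := by
  obtain ⟨φ, -, rfl, -⟩ := hF
  exact exposedFace_subset φ

theorem IsEdge.neg (hsymm : S = -S) (hF : IsEdge S F) : IsEdge S (-F) := by
  obtain ⟨φ, hφ, rfl, hdim⟩ := hF
  refine ⟨-φ, neg_ne_zero.2 hφ, (exposedFace_neg hsymm φ).symm, ?_⟩
  rwa [setDim2_eq_finrank_vectorSpan, vectorSpan_neg, ← setDim2_eq_finrank_vectorSpan]

theorem IsEdge.notMem_interior (hF : IsEdge S F) {x : ℝ²} (hx : x ∈ F) : x ∉ interior S := by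
  obtain ⟨φ, hφ, rfl, -⟩ := hF
  exact notMem_interior_of_mem_exposedFace hφ hx

theorem IsEdge.eq_exposedFace_of_subset (hF : IsEdge S F) {ψ : ℝ² →ₗ[ℝ] ℝ} (hψ : ψ ≠ 0)
    (hFψ : F ⊆ exposedFace S ψ) : F = exposedFace S ψ := by
  obtain ⟨φ, -, hFφ, hdim⟩ := hF
  replace hFφ : F = exposedFace S φ := hFφ
  rw [setDim2_eq_finrank_vectorSpan] at hdim
  -- `F` spans the line `ker ψ`, on which the normal `φ` of `F` is constant.
  have hker : vectorSpan ℝ F = LinearMap.ker ψ :=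
    Submodule.eq_of_le_of_finrank_le
      ((vectorSpan_mono ℝ hFψ).trans (vectorSpan_exposedFace_le_ker S ψ))
      (hdim ▸ finrank_ker_le_one hψ)
  obtain ⟨v, hv⟩ : F.Nonempty := Set.nonempty_iff_ne_empty.2 fun h => by
    rw [h, vectorSpan_empty, finrank_bot] at hdim
    exact zero_ne_one hdim
  refine hFψ.antisymm fun g hg => ?_
  have hgvψ : g - v ∈ LinearMap.ker ψ :=
    vectorSpan_exposedFace_le_ker S ψ (vsub_mem_vectorSpan ℝ hg (hFψ hv))
  rw [← hker, hFφ] at hgvψ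
  have hgv : φ g = φ v := by
    simpa [sub_eq_zero] using vectorSpan_exposedFace_le_ker S φ hgvψ
  rw [hFφ] at hv ⊢
  exact ⟨hg.1, fun y hy => hgv ▸ hv.2 y hy⟩

theorem IsEdge.eq_exposedFace_of_mem_intrinsicInterior (hF : IsEdge S F) {ψ : ℝ² →ₗ[ℝ] ℝ}
    (hψ : ψ ≠ 0) {v : ℝ²} (hv : v ∈ intrinsicInterior ℝ F) (hvψ : v ∈ exposedFace S ψ) :
    F = exposedFace S ψ :=
  hF.eq_exposedFace_of_subset hψ fun y hy => by
    obtain ⟨y', hy', hseg⟩ := exists_mem_openSegment_of_mem_intrinsicInterior hv hy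
    exact (isExtreme_exposedFace ψ).left_mem_of_mem_openSegment (hF.subset hy)
      (hF.subset hy') hvψ hseg

/-- A supporting functional `f` at a boundary point `α • va + β • wb` would attain its maximum
over `S`, up to the signs of `α` and `β`, at `va` and at `wb`, so `± f` would expose both edges. -/
theorem IsEdge.smul_add_smul_mem_interior (hconv : Convex ℝ S) (hsymm : S = -S)
    (h0 : (0 : ℝ²) ∈ interior S) {Fa Fb : Set ℝ²} (hFa : IsEdge S Fa) (hFb : IsEdge S Fb)
    (hne : Fb ≠ Fa) (hnne : Fb ≠ -Fa) {va wb : ℝ²} (hva : va ∈ intrinsicInterior ℝ Fa)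
    (hwb : wb ∈ intrinsicInterior ℝ Fb) {α β : ℝ} (hα : α ≠ 0) (hβ : β ≠ 0)
    (hαβ : |α| + |β| ≤ 1) : α • va + β • wb ∈ interior S := by
  by_contra hz
  obtain ⟨f, hf0, hf⟩ := exists_le_of_notMem_interior hconv ⟨0, h0⟩ hz
  set M := f (α • va + β • wb) with hM
  have habs : ∀ y ∈ S, |f y| ≤ M := fun y hy => by
    have := hf (-y) (by rw [hsymm]; simpa using hy)
    rw [map_neg] at this
    exact abs_le.2 ⟨by linarith, hf y hy⟩
  have hscaled : ∀ γ, ∀ y ∈ S, γ * f y ≤ |γ| * M := fun γ y hy =>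
    (le_abs_self _).trans (abs_mul γ (f y) ▸ mul_le_mul_of_nonneg_left (habs y hy) (abs_nonneg γ))
  have hM0 : 0 ≤ M := (abs_nonneg _).trans (habs 0 (interior_subset h0))
  have hMαβ : |α| * M + |β| * M ≤ M := by nlinarith
  have hvaS := hFa.subset (intrinsicInterior_subset hva)
  have hwbS := hFb.subset (intrinsicInterior_subset hwb)
  have hsum : α * f va + β * f wb = M := by simp [hM]
  have hFa' : Fa = exposedFace S (α • f) :=
    hFa.eq_exposedFace_of_mem_intrinsicInterior (smul_ne_zero hα hf0) hva ⟨hvaS, fun y hy => by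
      simp only [LinearMap.smul_apply, smul_eq_mul]
      linarith [hscaled α y hy, hscaled β wb hwbS]⟩
  have hFb' : Fb = exposedFace S (β • f) :=
    hFb.eq_exposedFace_of_mem_intrinsicInterior (smul_ne_zero hβ hf0) hwb ⟨hwbS, fun y hy => by
      simp only [LinearMap.smul_apply, smul_eq_mul]
      linarith [hscaled β y hy, hscaled α va hvaS]⟩
  rcases exposedFace_smul_eq_or_eq_neg hsymm hα f with ha | ha <;>
  rcases exposedFace_smul_eq_or_eq_neg hsymm hβ f with hb | hb
  · exact hne (by rw [hFa', hFb', ha, hb])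
  · exact hnne (by rw [hFa', hFb', ha, hb])
  · exact hnne (by rw [hFa', hFb', ha, hb, neg_neg])
  · exact hne (by rw [hFa', hFb', ha, hb])

theorem isEdge_exposedFace_of_ne {ψ : ℝ² →ₗ[ℝ] ℝ} (hψ : ψ ≠ 0) {p q : ℝ²}
    (hp : p ∈ exposedFace S ψ) (hq : q ∈ exposedFace S ψ) (hpq : p ≠ q) :
    IsEdge S (exposedFace S ψ) := by
  refine ⟨ψ, hψ, rfl, ?_⟩
  rw [setDim2_eq_finrank_vectorSpan]
  refine le_antisymm ((Submodule.finrank_mono (vectorSpan_exposedFace_le_ker S ψ)).trans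
    (finrank_ker_le_one hψ)) (Nat.one_le_iff_ne_zero.2 fun h => hpq ?_)
  rw [Submodule.finrank_eq_zero] at h
  simpa [h, sub_eq_zero] using vsub_mem_vectorSpan ℝ hp hq

theorem exists_isEdge_notMem_vectorSpan {V : Finset ℝ²}
    (hdim : setDim2 (convexHull ℝ (V : Set ℝ²)) = 2) {e : ℝ²} (he : e ≠ 0) :
    ∃ F, IsEdge (convexHull ℝ (V : Set ℝ²)) F ∧ e ∉ vectorSpan ℝ F := by
  obtain ⟨c, hce⟩ : ∃ c : ℝ² →ₗ[ℝ] ℝ, c e ≠ 0 := by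
    by_contra! h
    exact he ((Module.forall_dual_apply_eq_zero_iff ℝ e).1 h)
  obtain ⟨b, hb, hbmax⟩ := V.exists_max_image c <| Finset.nonempty_iff_ne_empty.2 fun h => by
    rw [h, Finset.coe_empty, convexHull_empty, setDim2_eq_finrank_vectorSpan, vectorSpan_empty,
      finrank_bot] at hdim
    exact absurd hdim (by norm_num)
  obtain ⟨p₀, hp₀, hp₀e⟩ : ∃ p₀ ∈ V, p₀ - b ∉ Submodule.span ℝ {e} := by
    by_contra! h
    have hle : vectorSpan ℝ (convexHull ℝ (V : Set ℝ²)) ≤ Submodule.span ℝ {e} := by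
      rw [← direction_affineSpan, affineSpan_convexHull, direction_affineSpan,
        vectorSpan_eq_span_vsub_set_right ℝ (Finset.mem_coe.2 hb), Submodule.span_le]
      rintro _ ⟨x, hx, rfl⟩
      exact h x hx
    have := (Submodule.finrank_mono hle).trans (finrank_span_singleton he).le
    rw [← setDim2_eq_finrank_vectorSpan, hdim] at this
    omega
  obtain ⟨d, hd, hde⟩ := Submodule.exists_le_ker_of_notMem hp₀e
  replace hde : d e = 0 := hde (Submodule.mem_span_singleton_self e)
  obtain ⟨d, hde, hdb⟩ : ∃ d : ℝ² →ₗ[ℝ] ℝ, d e = 0 ∧ d b < d p₀ := by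
    rw [map_sub, sub_ne_zero] at hd
    rcases hd.lt_or_gt with h | h
    exacts [⟨-d, by simp [hde], by simpa using h⟩, ⟨d, hde, h⟩]
  obtain ⟨θ, p, hp, hpb, hpeq, hmax⟩ := V.exists_tilt_two_maximizers c d hbmax hp₀ hdb
  have hψe : (c + θ • d) e ≠ 0 := by simpa [hde] using hce
  refine ⟨_, isEdge_exposedFace_of_ne (ψ := c + θ • d) (fun h => hψe (by simp [h]))
    (mem_exposedFace_convexHull hp fun x hx => ?_) (mem_exposedFace_convexHull hb fun x hx => ?_)
    hpb, fun h => hψe (vectorSpan_exposedFace_le_ker _ _ h)⟩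
  · simpa [hpeq] using hmax x hx
  · simpa using hmax x hx

theorem exists_nonparallel_isEdges {V : Finset ℝ²}
    (hdim : setDim2 (convexHull ℝ (V : Set ℝ²)) = 2) :
    ∃ Fa Fb, IsEdge (convexHull ℝ (V : Set ℝ²)) Fa ∧ IsEdge (convexHull ℝ (V : Set ℝ²)) Fb ∧
      Fb ≠ Fa ∧ Fb ≠ -Fa := by
  obtain ⟨e₀, he₀⟩ := exists_ne (0 : ℝ²)
  obtain ⟨Fa, hFa, -⟩ := exists_isEdge_notMem_vectorSpan hdim he₀
  obtain ⟨e, he, he0⟩ : ∃ e ∈ vectorSpan ℝ Fa, e ≠ 0 := by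
    refine Submodule.exists_mem_ne_zero_of_ne_bot fun h => ?_
    obtain ⟨-, -, -, hdimF⟩ := hFa
    rw [setDim2_eq_finrank_vectorSpan, h, finrank_bot] at hdimF
    exact zero_ne_one hdimF
  obtain ⟨Fb, hFb, heFb⟩ := exists_isEdge_notMem_vectorSpan hdim he0
  exact ⟨Fa, Fb, hFa, hFb, by rintro rfl; exact heFb he,
    by rintro rfl; exact heFb (by rwa [vectorSpan_neg])⟩

end Edges

theorem IsLatticePoint.sub_intCast_smul {x p : ℝ²} (hx : IsLatticePoint x)
    (hp : IsLatticePoint p) (a : ℤ) : IsLatticePoint (x - (a : ℝ) • p) := fun i => by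
  obtain ⟨m, hm⟩ := hx i
  obtain ⟨n, hn⟩ := hp i
  exact ⟨m - a * n, by simp [hm, hn]⟩

theorem sum_intCast_mul_eq_mulVecLin (M : Matrix (Fin 2) (Fin 2) ℤ) :
    (fun x : ℝ² => fun i => ∑ j, (M i j : ℝ) * x j) = (M.map (↑)).mulVecLin := by
  ext x i
  simp [Matrix.mulVec, dotProduct]

structure IsLatticeBasis (p q : ℝ²) : Prop where
  isLatticePoint_left : IsLatticePoint p
  isLatticePoint_right : IsLatticePoint q
  linearIndependent : LinearIndependent ℝ ![p, q]
  exists_int_coeffs : ∀ x, IsLatticePoint x → ∃ a b : ℤ, x = (a : ℝ) • p + (b : ℝ) • q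

namespace IsLatticeBasis

variable {p q r : ℝ²}

theorem ne_zero_left (h : IsLatticeBasis p q) : p ≠ 0 := by
  simpa using h.linearIndependent.ne_zero 0

theorem ne_zero_right (h : IsLatticeBasis p q) : q ≠ 0 := by
  simpa using h.linearIndependent.ne_zero 1

theorem symm (h : IsLatticeBasis p q) : IsLatticeBasis q p where
  isLatticePoint_left := h.isLatticePoint_right
  isLatticePoint_right := h.isLatticePoint_left
  linearIndependent := LinearIndependent.pair_symm_iff.1 h.linearIndependent
  exists_int_coeffs x hx := by
    obtain ⟨a, b, hab⟩ := h.exists_int_coeffs x hx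
    exact ⟨b, a, hab.trans (add_comm _ _)⟩

theorem neg_right (h : IsLatticeBasis p q) : IsLatticeBasis p (-q) where
  isLatticePoint_left := h.isLatticePoint_left
  isLatticePoint_right := by
    convert h.isLatticePoint_right.sub_intCast_smul h.isLatticePoint_right 2 using 1
    push_cast
    module
  linearIndependent := LinearIndependent.pair_neg_right_iff.2 h.linearIndependent
  exists_int_coeffs x hx := by
    obtain ⟨a, b, hab⟩ := h.exists_int_coeffs x hx
    exact ⟨a, -b, by rw [hab]; push_cast; module⟩

theorem add_right (h : IsLatticeBasis p q) : IsLatticeBasis p (p + q) where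
  isLatticePoint_left := h.isLatticePoint_left
  isLatticePoint_right := by
    convert h.isLatticePoint_right.sub_intCast_smul h.isLatticePoint_left (-1) using 1
    push_cast
    module
  linearIndependent := LinearIndependent.pair_add_right_iff.2 h.linearIndependent
  exists_int_coeffs x hx := by
    obtain ⟨a, b, hab⟩ := h.exists_int_coeffs x hx
    exact ⟨a - b, b, by rw [hab]; push_cast; module⟩

theorem coeff_eq_one_or_neg_one (hpq : IsLatticeBasis p q) (hpr : IsLatticeBasis p r) {a b : ℤ}
    (hr : r = (a : ℝ) • p + (b : ℝ) • q) : b = 1 ∨ b = -1 := by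
  obtain ⟨m, n, hq⟩ := hpr.exists_int_coeffs q hpq.isLatticePoint_right
  have h := (LinearIndependent.pair_iff.1 hpq.linearIndependent) ((m : ℝ) + n * a) (n * b - 1)
    (by rw [hr] at hq; linear_combination (norm := module) -hq)
  have hnb : b * n = 1 := by exact_mod_cast (by linarith [h.2] : (b : ℝ) * n = 1)
  exact Int.eq_one_or_neg_one_of_mul_eq_one hnb

theorem eq_add_or_sub (hpq : IsLatticeBasis p q) (hpr : IsLatticeBasis p r)
    (hqr : IsLatticeBasis q r) : r = p + q ∨ r = -(p + q) ∨ r = p - q ∨ r = -(p - q) := by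
  obtain ⟨a, b, hr⟩ := hpq.exists_int_coeffs r hpr.isLatticePoint_right
  have hb := hpq.coeff_eq_one_or_neg_one hpr hr
  have ha := hpq.symm.coeff_eq_one_or_neg_one hqr (hr.trans (add_comm _ _))
  rcases ha with rfl | rfl <;> rcases hb with rfl | rfl <;> simp only [hr] <;> push_cast
  · exact Or.inl (by module)
  · exact Or.inr (Or.inr (Or.inl (by module)))
  · exact Or.inr (Or.inr (Or.inr (by module)))
  · exact Or.inr (Or.inl (by module))

theorem not_isLatticeBasis_add_sub (h : IsLatticeBasis p q) :
    ¬ IsLatticeBasis (p + q) (p - q) := fun h' => by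
  obtain ⟨a, b, hp⟩ := h'.exists_int_coeffs p h.isLatticePoint_left
  have := (LinearIndependent.pair_iff.1 h.linearIndependent) (a + b - 1) (a - b)
    (by linear_combination (norm := module) -hp)
  have h1 : a + b = 1 := by exact_mod_cast (by linarith [this.1] : (a : ℝ) + b = 1)
  have h2 : a = b := by exact_mod_cast (by linarith [this.2] : (a : ℝ) = b)
  omega

theorem exists_matrix (h : IsLatticeBasis p q) :
    ∃ M : Matrix (Fin 2) (Fin 2) ℤ, IsUnit M.det ∧
      (M.map (↑)).mulVecLin p = ![1, 0] ∧ (M.map (↑)).mulVecLin q = ![0, 1] := by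
  obtain ⟨a, b, hab⟩ := h.exists_int_coeffs ![1, 0] fun i => by
    fin_cases i
    exacts [⟨1, by simp⟩, ⟨0, by simp⟩]
  obtain ⟨c, d, hcd⟩ := h.exists_int_coeffs ![0, 1] fun i => by
    fin_cases i
    exacts [⟨0, by simp⟩, ⟨1, by simp⟩]
  choose zp hzp using h.isLatticePoint_left
  choose zq hzq using h.isLatticePoint_right
  obtain rfl : p = fun i => (zp i : ℝ) := funext hzp
  obtain rfl : q = fun i => (zq i : ℝ) := funext hzq
  have e := fun i => congrFun hab i
  have f := fun i => congrFun hcd i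
  simp only [Fin.forall_fin_two, Pi.add_apply, Pi.smul_apply, smul_eq_mul, Matrix.cons_val_zero,
    Matrix.cons_val_one, Matrix.cons_val_fin_one] at e f
  norm_cast at e f
  -- `M` inverts the integer matrix `A` whose columns are `p` and `q`.
  let M : Matrix (Fin 2) (Fin 2) ℤ := !![a, c; b, d]
  let A : Matrix (Fin 2) (Fin 2) ℤ := !![zp 0, zq 0; zp 1, zq 1]
  have hAM : A * M = 1 := by
    ext i j
    fin_cases i <;> fin_cases j <;>
      simp only [A, M, Matrix.mul_apply, Fin.sum_univ_two, Matrix.of_apply, Matrix.cons_val',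
        Matrix.cons_val_fin_one, Matrix.cons_val_zero, Matrix.cons_val_one, Matrix.one_apply,
        Fin.isValue, Fin.zero_eta, Fin.mk_one, if_true, if_false, zero_ne_one, one_ne_zero] <;>
      linarith
  have hMA : M * A = 1 := mul_eq_one_comm.1 hAM
  have hMA' := fun i j => congrFun (congrFun hMA i) j
  simp only [A, M, Matrix.mul_apply, Fin.sum_univ_two, Matrix.of_apply, Matrix.cons_val',
    Matrix.cons_val_fin_one, Matrix.cons_val_zero, Matrix.cons_val_one, Matrix.one_apply,
    Fin.forall_fin_two, if_true, if_false, zero_ne_one, one_ne_zero] at hMA'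
  refine ⟨M, Matrix.isUnit_det_of_right_inverse hMA, ?_, ?_⟩ <;> funext i <;> fin_cases i <;>
    simp only [M, Matrix.mulVecLin_apply, Matrix.mulVec, dotProduct, Matrix.map_apply,
      Fin.sum_univ_two, Matrix.of_apply, Matrix.cons_val', Matrix.cons_val_fin_one,
      Matrix.cons_val_zero, Matrix.cons_val_one, Fin.isValue, Fin.zero_eta, Fin.mk_one] <;>
    norm_cast <;> linarith

theorem exists_matrix_image_square (h : IsLatticeBasis p q) :
    ∃ M : Matrix (Fin 2) (Fin 2) ℤ, IsUnit M.det ∧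
      (fun x : ℝ² => fun i => ∑ j, (M i j : ℝ) * x j) '' convexHull ℝ {p, -p, q, -q} =
        convexHull ℝ {![(1 : ℝ), 0], ![(0 : ℝ), 1], ![(-1 : ℝ), 0], ![(0 : ℝ), -1]} := by
  obtain ⟨M, hM, hp, hq⟩ := h.exists_matrix
  refine ⟨M, hM, ?_⟩
  rw [sum_intCast_mul_eq_mulVecLin, LinearMap.image_convexHull]
  simp only [Set.image_insert_eq, Set.image_singleton, map_neg, hp, hq]
  congr 1
  ext x
  simp only [Set.mem_insert_iff, Set.mem_singleton_iff, Matrix.neg_cons, Matrix.neg_empty, neg_zero]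
  tauto

theorem exists_matrix_image_hexagon (h : IsLatticeBasis p (p + q)) :
    ∃ M : Matrix (Fin 2) (Fin 2) ℤ, IsUnit M.det ∧
      (fun x : ℝ² => fun i => ∑ j, (M i j : ℝ) * x j) ''
          convexHull ℝ {p, -p, q, -q, p + q, -(p + q)} =
        convexHull ℝ {![(1 : ℝ), 0], ![(0 : ℝ), 1], ![(-1 : ℝ), 1],
          ![(-1 : ℝ), 0], ![(0 : ℝ), -1], ![(1 : ℝ), -1]} := by
  obtain ⟨M, hM, hp, hpq⟩ := h.exists_matrix
  have hq : (M.map (↑)).mulVecLin q = ![-1, 1] := by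
    rw [map_add, hp] at hpq
    rw [eq_sub_of_add_eq' hpq]
    simp
  refine ⟨M, hM, ?_⟩
  rw [sum_intCast_mul_eq_mulVecLin, LinearMap.image_convexHull]
  simp only [Set.image_insert_eq, Set.image_singleton, map_neg, hp, hq, hpq]
  congr 1
  ext x
  simp only [Set.mem_insert_iff, Set.mem_singleton_iff, Matrix.neg_cons, Matrix.neg_empty,
    neg_zero, neg_neg]
  tauto

end IsLatticeBasis

structure IsUnimodularSet (U : Set ℝ²) : Prop where
  neg_mem : ∀ x ∈ U, -x ∈ U
  isLatticeBasis : ∀ x ∈ U, ∀ y ∈ U, y ≠ x → y ≠ -x → IsLatticeBasis x y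

namespace IsUnimodularSet

variable {U : Set ℝ²} {p q : ℝ²}

theorem subset_of_isLatticeBasis (hU : IsUnimodularSet U) (hpq : IsLatticeBasis p q) (hp : p ∈ U)
    (hq : q ∈ U) : U ⊆ {p, -p, q, -q, p + q, -(p + q), p - q, -(p - q)} := by
  intro r hr
  by_cases hrp : r = p ∨ r = -p ∨ r = q ∨ r = -q
  · simp only [Set.mem_insert_iff, Set.mem_singleton_iff]
    tauto
  simp only [not_or] at hrp
  rcases hpq.eq_add_or_sub (hU.isLatticeBasis p hp r hr hrp.1 hrp.2.1)
    (hU.isLatticeBasis q hq r hr hrp.2.2.1 hrp.2.2.2) with h | h | h | h <;> simp [h]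

theorem sub_notMem (hU : IsUnimodularSet U) (hpq : IsLatticeBasis p q) (hadd : p + q ∈ U) :
    p - q ∉ U := fun hsub => hpq.not_isLatticeBasis_add_sub <|
  hU.isLatticeBasis _ hadd _ hsub
    (fun h => hpq.ne_zero_right (by linear_combination (norm := module) -(1 / 2 : ℝ) • h))
    (fun h => hpq.ne_zero_left (by linear_combination (norm := module) (1 / 2 : ℝ) • h))

theorem eq_hexagon (hU : IsUnimodularSet U) (hpq : IsLatticeBasis p q) (hp : p ∈ U) (hq : q ∈ U)
    (hadd : p + q ∈ U) : U = {p, -p, q, -q, p + q, -(p + q)} := by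
  have hsub := hU.sub_notMem hpq hadd
  refine subset_antisymm (fun r hr => ?_) ?_
  · have := hU.subset_of_isLatticeBasis hpq hp hq hr
    simp only [Set.mem_insert_iff, Set.mem_singleton_iff] at this ⊢
    rcases this with h | h | h | h | h | h | h | h
    all_goals first
      | tauto
      | (subst h; exact absurd hr hsub)
      | (subst h; exact absurd (by simpa using hU.neg_mem _ hr) hsub)
  · simp only [Set.insert_subset_iff, Set.singleton_subset_iff]
    exact ⟨hp, hU.neg_mem _ hp, hq, hU.neg_mem _ hq, hadd, hU.neg_mem _ hadd⟩

theorem eq_square (hU : IsUnimodularSet U) (hpq : IsLatticeBasis p q) (hp : p ∈ U) (hq : q ∈ U)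
    (hadd : p + q ∉ U) (hsub : p - q ∉ U) : U = {p, -p, q, -q} := by
  refine subset_antisymm (fun r hr => ?_) ?_
  · have := hU.subset_of_isLatticeBasis hpq hp hq hr
    simp only [Set.mem_insert_iff, Set.mem_singleton_iff] at this ⊢
    rcases this with h | h | h | h | h | h | h | h
    all_goals first
      | tauto
      | (subst h; exact absurd hr ‹_›)
      | (subst h; exact absurd (by simpa using hU.neg_mem _ hr) hadd)
      | (subst h; exact absurd (by simpa using hU.neg_mem _ hr) hsub)
  · simp only [Set.insert_subset_iff, Set.singleton_subset_iff]
    exact ⟨hp, hU.neg_mem _ hp, hq, hU.neg_mem _ hq⟩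

theorem exists_matrix_image (hU : IsUnimodularSet U) (hpq : IsLatticeBasis p q) (hp : p ∈ U)
    (hq : q ∈ U) :
    ∃ M : Matrix (Fin 2) (Fin 2) ℤ, IsUnit M.det ∧
      ((fun x : ℝ² => fun i => ∑ j, (M i j : ℝ) * x j) '' convexHull ℝ U =
        convexHull ℝ {![(1 : ℝ), 0], ![(0 : ℝ), 1], ![(-1 : ℝ), 0], ![(0 : ℝ), -1]} ∨
      (fun x : ℝ² => fun i => ∑ j, (M i j : ℝ) * x j) '' convexHull ℝ U =
        convexHull ℝ {![(1 : ℝ), 0], ![(0 : ℝ), 1], ![(-1 : ℝ), 1],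
          ![(-1 : ℝ), 0], ![(0 : ℝ), -1], ![(1 : ℝ), -1]}) := by
  by_cases hadd : p + q ∈ U
  · obtain ⟨M, hM, himg⟩ := hpq.add_right.exists_matrix_image_hexagon
    exact ⟨M, hM, Or.inr (hU.eq_hexagon hpq hp hq hadd ▸ himg)⟩
  by_cases hsub : p - q ∈ U
  · rw [sub_eq_add_neg] at hsub
    obtain ⟨M, hM, himg⟩ := hpq.neg_right.add_right.exists_matrix_image_hexagon
    exact ⟨M, hM, Or.inr (hU.eq_hexagon hpq.neg_right hp (hU.neg_mem q hq) hsub ▸ himg)⟩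
  · obtain ⟨M, hM, himg⟩ := hpq.exists_matrix_image_square
    exact ⟨M, hM, Or.inl (hU.eq_square hpq hp hq hadd hsub ▸ himg)⟩

end IsUnimodularSet

section EdgePoints

variable {S Fa Fb : Set ℝ²} {pa pb : ℝ²}

theorem IsEdge.linearIndependent (hconv : Convex ℝ S) (hsymm : S = -S)
    (h0 : (0 : ℝ²) ∈ interior S) (hFa : IsEdge S Fa) (hFb : IsEdge S Fb) (hne : Fb ≠ Fa)
    (hnne : Fb ≠ -Fa) (hpa : pa ∈ intrinsicInterior ℝ Fa) (hpb : pb ∈ intrinsicInterior ℝ Fb) :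
    LinearIndependent ℝ ![pa, pb] := by
  have hpaF := intrinsicInterior_subset hpa
  have hpbF := intrinsicInterior_subset hpb
  have hNa := gauge_eq_one_of_notMem_interior hconv h0 (hFa.subset hpaF)
    (hFa.notMem_interior hpaF)
  have hNb := gauge_eq_one_of_notMem_interior hconv h0 (hFb.subset hpbF)
    (hFb.notMem_interior hpbF)
  rw [LinearIndependent.pair_iff]
  intro r s hrs
  -- The gauge of `S` is a norm equal to `1` at `pa` and `pb`.
  have hrs' : |r| = |s| := by
    have := congrArg (gauge S) (eq_neg_of_add_eq_zero_left hrs)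
    rwa [gauge_neg (fun x hx => by rw [hsymm]; simpa using hx), gauge_smul_of_eq_neg hconv hsymm,
      gauge_smul_of_eq_neg hconv hsymm, hNa, hNb, mul_one, mul_one] at this
  by_contra hrs0
  have hr : r ≠ 0 := fun hr => hrs0 ⟨hr, abs_eq_zero.1 (hrs' ▸ abs_eq_zero.2 hr)⟩
  have hs : s ≠ 0 := fun hs => hr (abs_eq_zero.1 (hrs'.trans (abs_eq_zero.2 hs)))
  have hβ : |-(s / r) / 2| = 1 / 2 := by
    rw [abs_div, abs_neg, abs_div, hrs', div_self (abs_ne_zero.2 hs)]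
    norm_num
  have hpa_eq : pa = (-(s / r)) • pb := by
    rw [← inv_smul_smul₀ hr pa, eq_neg_of_add_eq_zero_left hrs, smul_neg, smul_smul, neg_smul,
      div_eq_inv_mul]
  -- `pa = (1/2) • pa + (-(s / r) / 2) • pb` is a boundary point of the excluded kind.
  have key := hFa.smul_add_smul_mem_interior hconv hsymm h0 hFb hne hnne hpa hpb
    (α := 1 / 2) (β := -(s / r) / 2) (by norm_num) (by simp [hr, hs]) (by rw [hβ]; norm_num)
  rw [div_eq_inv_mul (-(s / r)), ← smul_smul, ← hpa_eq] at key
  exact hFa.notMem_interior hpaF (by convert key using 1; module)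

theorem IsEdge.isLatticeBasis (hconv : Convex ℝ S) (hsymm : S = -S)
    (h0 : (0 : ℝ²) ∈ interior S) (hlat : ∀ x, IsLatticePoint x → x ∈ interior S → x = 0)
    (hFa : IsEdge S Fa) (hFb : IsEdge S Fb) (hne : Fb ≠ Fa) (hnne : Fb ≠ -Fa)
    (hpa : pa ∈ intrinsicInterior ℝ Fa) (hpb : pb ∈ intrinsicInterior ℝ Fb)
    (hpaL : IsLatticePoint pa) (hpbL : IsLatticePoint pb) : IsLatticeBasis pa pb := by
  have hli := hFa.linearIndependent hconv hsymm h0 hFb hne hnne hpa hpb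
  refine ⟨hpaL, hpbL, hli, fun x hx => ?_⟩
  obtain ⟨α, β, hxαβ⟩ : ∃ α β : ℝ, α • pa + β • pb = x := by
    have := hli.span_eq_top_of_card_eq_finrank (by simp)
    rw [Matrix.range_cons, Matrix.range_cons, Matrix.range_empty, Set.union_empty,
      Set.singleton_union] at this
    exact Submodule.mem_span_pair.1 (this ▸ Submodule.mem_top)
  refine ⟨round α, round β, ?_⟩
  have hg : x - (round α : ℝ) • pa - (round β : ℝ) • pb =
      (α - round α) • pa + (β - round β) • pb := by
    rw [← hxαβ]
    module
  have hgL := (hx.sub_intCast_smul hpaL (round α)).sub_intCast_smul hpbL (round β)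
  have hα := abs_sub_round α
  have hβ := abs_sub_round β
  have hgint : x - (round α : ℝ) • pa - (round β : ℝ) • pb ∈ interior S := by
    rw [hg]
    by_cases hlt : |α - round α| + |β - round β| < 1
    · exact smul_add_smul_mem_interior_of_abs_add_lt_one hconv hsymm h0
        (hFa.subset (intrinsicInterior_subset hpa)) (hFb.subset (intrinsicInterior_subset hpb)) hlt
    · refine hFa.smul_add_smul_mem_interior hconv hsymm h0 hFb hne hnne hpa hpb
        (fun h => hlt ?_) (fun h => hlt ?_) (by linarith) <;> rw [h, abs_zero] <;> linarith
  have := hlat _ hgL hgint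
  rwa [sub_sub, sub_eq_zero] at this

end EdgePoints

theorem isUnimodularSet_edgePoints {S : Set ℝ²} (hconv : Convex ℝ S) (hsymm : S = -S)
    (h0 : (0 : ℝ²) ∈ interior S) (hlat : ∀ x, IsLatticePoint x → x ∈ interior S → x = 0)
    {u : Set ℝ² → ℝ²} (hu : ∀ F, IsEdge S F → u F ∈ intrinsicInterior ℝ F ∧ IsLatticePoint (u F))
    (husymm : ∀ F, IsEdge S F → u (-F) = -u F) :
    IsUnimodularSet {x | ∃ F, IsEdge S F ∧ x = u F} where
  neg_mem := by
    rintro _ ⟨F, hF, rfl⟩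
    exact ⟨-F, hF.neg hsymm, (husymm F hF).symm⟩
  isLatticeBasis := by
    rintro _ ⟨F, hF, rfl⟩ _ ⟨G, hG, rfl⟩ hne hnne
    exact hF.isLatticeBasis hconv hsymm h0 hlat hG (by rintro rfl; exact hne rfl)
      (by rintro rfl; exact hnne (husymm F hF)) (hu F hF).1 (hu G hG).1 (hu F hF).2 (hu G hG).2

theorem maximal_polygon_classification_general (S : Set (Fin 2 → ℝ))
    (hpoly : ∃ V : Finset (Fin 2 → ℝ), S = convexHull ℝ (V : Set (Fin 2 → ℝ)))
    (hsymm : S = -S)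
    (hdim : setDim2 S = 2)
    (hint : {x : Fin 2 → ℝ | IsLatticePoint x ∧ x ∈ interior S} = {0})
    (u : Set (Fin 2 → ℝ) → (Fin 2 → ℝ))
    (hu : ∀ F, IsEdge S F → u F ∈ intrinsicInterior ℝ F ∧ IsLatticePoint (u F))
    (husymm : ∀ F, IsEdge S F → u (-F) = -u F) :
    ∃ M : Matrix (Fin 2) (Fin 2) ℤ, IsUnit M.det ∧
      (((fun x : Fin 2 → ℝ => fun i => ∑ j, (M i j : ℝ) * x j) ''
          convexHull ℝ {x | ∃ F, IsEdge S F ∧ x = u F}) =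
        convexHull ℝ {![(1 : ℝ), 0], ![(0 : ℝ), 1], ![(-1 : ℝ), 0], ![(0 : ℝ), -1]} ∨
      ((fun x : Fin 2 → ℝ => fun i => ∑ j, (M i j : ℝ) * x j) ''
          convexHull ℝ {x | ∃ F, IsEdge S F ∧ x = u F}) =
        convexHull ℝ {![(1 : ℝ), 0], ![(0 : ℝ), 1], ![(-1 : ℝ), 1],
          ![(-1 : ℝ), 0], ![(0 : ℝ), -1], ![(1 : ℝ), -1]}) := by
  obtain ⟨V, rfl⟩ := hpoly
  have hconv := convex_convexHull ℝ (V : Set ℝ²)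
  have h0 : (0 : ℝ²) ∈ interior (convexHull ℝ (V : Set ℝ²)) := ((Set.ext_iff.1 hint 0).2 rfl).2
  have hlat : ∀ x, IsLatticePoint x → x ∈ interior (convexHull ℝ (V : Set ℝ²)) → x = 0 :=
    fun x hx hxi => (Set.ext_iff.1 hint x).1 ⟨hx, hxi⟩
  obtain ⟨Fa, Fb, hFa, hFb, hne, hnne⟩ := exists_nonparallel_isEdges hdim
  exact (isUnimodularSet_edgePoints hconv hsymm h0 hlat hu husymm).exists_matrix_image
    (hFa.isLatticeBasis hconv hsymm h0 hlat hFb hne hnne (hu Fa hFa).1 (hu Fb hFb).1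
      (hu Fa hFa).2 (hu Fb hFb).2) ⟨Fa, hFa, rfl⟩ ⟨Fb, hFb, rfl⟩

/-- Let `S ⊆ ℝ²` be a `0`-symmetric convex polygon of dimension `2` whose only interior
lattice point is the origin and which has a lattice point on its boundary, and which is
maximal: every edge contains a lattice point in its relative interior.  Choose on each
edge `F` a lattice point `u F` in its relative interior so that `u (-F) = - u F`, and let
`Q` be the convex hull of the chosen points.  Then some change of basis of the lattice
`ℤ²` (an integer matrix with invertible determinant) takes `Q` to the square with vertices
`(1,0), (0,1), (-1,0), (0,-1)` or to the hexagon with vertices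
`(1,0), (0,1), (-1,1), (-1,0), (0,-1), (1,-1)`. -/
theorem maximal_polygon_classification (S : Set (Fin 2 → ℝ))
    (hpoly : ∃ V : Finset (Fin 2 → ℝ), S = convexHull ℝ (V : Set (Fin 2 → ℝ)))
    (hsymm : S = -S)
    (hdim : setDim2 S = 2)
    (hint : {x : Fin 2 → ℝ | IsLatticePoint x ∧ x ∈ interior S} = {0})
    (hbd : ∃ x : Fin 2 → ℝ, IsLatticePoint x ∧ x ∈ frontier S)
    (hmax : ∀ F, IsEdge S F → ∃ x ∈ intrinsicInterior ℝ F, IsLatticePoint x)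
    (u : Set (Fin 2 → ℝ) → (Fin 2 → ℝ))
    (hu : ∀ F, IsEdge S F → u F ∈ intrinsicInterior ℝ F ∧ IsLatticePoint (u F))
    (husymm : ∀ F, IsEdge S F → u (-F) = -u F) :
    ∃ M : Matrix (Fin 2) (Fin 2) ℤ, IsUnit M.det ∧
      (((fun x : Fin 2 → ℝ => fun i => ∑ j, (M i j : ℝ) * x j) ''
          convexHull ℝ {x | ∃ F, IsEdge S F ∧ x = u F}) =
        convexHull ℝ {![(1 : ℝ), 0], ![(0 : ℝ), 1], ![(-1 : ℝ), 0], ![(0 : ℝ), -1]} ∨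
      ((fun x : Fin 2 → ℝ => fun i => ∑ j, (M i j : ℝ) * x j) ''
          convexHull ℝ {x | ∃ F, IsEdge S F ∧ x = u F}) =
        convexHull ℝ {![(1 : ℝ), 0], ![(0 : ℝ), 1], ![(-1 : ℝ), 1],
          ![(-1 : ℝ), 0], ![(0 : ℝ), -1], ![(1 : ℝ), -1]}) :=
  maximal_polygon_classification_general S hpoly hsymm hdim hint u hu husymm
end
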